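/- Let (𝔤, ⟨·,·⟩) be a finite-dimensional Euclidean Lie algebra and J : 𝔤 → 𝔤 a positive-definite self-adjoint endomorphism. Define the modified inner product ⟨u,v⟩' = ⟨Ju,v⟩. Then the identity map Id : (𝔤, ⟨·,·⟩) → (𝔤, ⟨·,·⟩') has vanishing tension (is harmonic) if and only if for every u ∈ 𝔤, tr(J ∘ ad_u) = tr(ad_{Ju}). -/

import Mathlib

/-!
Putting `u = v` in the Koszul formulas gives `⟨A e e, w⟩ = ⟨[w, e], e⟩` and
`⟨J B e e, w⟩ = ⟨J [w, e], e⟩`. Summed over an orthonormal basis, both tension terms become traces,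
so that `⟨J τ, u⟩ = tr (J ∘ ad_u) - tr (ad_{J u})`. As `⟨J ·, ·⟩` is positive definite, `τ = 0`
exactly when this linear form in `u` vanishes.
-/

namespace LinearMap.BilinForm

variable {R M ι : Type*} [CommRing R] [AddCommGroup M] [Module R M] [Fintype ι] [DecidableEq ι]
  {β : LinearMap.BilinForm R M} {b : Module.Basis ι R M}

theorem basis_repr_apply_of_orthonormal (hb : ∀ i j, β (b i) (b j) = if i = j then 1 else 0)
    (x : M) (i : ι) : b.repr x i = β x (b i) := by
  conv_rhs => rw [← b.sum_repr x]
  simp only [map_sum, LinearMap.sum_apply, map_smul, LinearMap.smul_apply, smul_eq_mul, hb]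
  simp

theorem trace_eq_sum_of_orthonormal (hb : ∀ i j, β (b i) (b j) = if i = j then 1 else 0)
    (f : M →ₗ[R] M) : trace R M f = ∑ i, β (f (b i)) (b i) := by
  rw [trace_eq_matrix_trace R b, Matrix.trace]
  simp [LinearMap.toMatrix_apply, basis_repr_apply_of_orthonormal hb]

end LinearMap.BilinForm

theorem LieAlgebra.koszul_apply_self {R L : Type*} [CommRing R] [IsDomain R] [NeZero (2 : R)]
    [LieRing L] [LieAlgebra R L] {β : LinearMap.BilinForm R L} {A : L →ₗ[R] L →ₗ[R] L}
    (hA : ∀ u v w : L, 2 * β (A u v) w = β ⁅u, v⁆ w + β ⁅w, u⁆ v + β ⁅w, v⁆ u) (u w : L) :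
    β (A u u) w = β ⁅w, u⁆ u := by
  refine mul_left_cancel₀ (two_ne_zero : (2 : R) ≠ 0) ?_
  rw [hA, lie_self]
  simp only [map_zero, LinearMap.zero_apply]
  ring

theorem stmt_12_general {g : Type*} [LieRing g] [LieAlgebra ℝ g]
    {ι : Type*} [Fintype ι] [DecidableEq ι]
    (ip : LinearMap.BilinForm ℝ g)
    (J : g →ₗ[ℝ] g)
    (hJsymm : ∀ x y : g, ip (J x) y = ip x (J y))
    (hJpos : ∀ x : g, x ≠ 0 → 0 < ip (J x) x)
    (A : g →ₗ[ℝ] g →ₗ[ℝ] g)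
    (hA : ∀ u v w : g, 2 * ip (A u v) w = ip ⁅u, v⁆ w + ip ⁅w, u⁆ v + ip ⁅w, v⁆ u)
    (B : g →ₗ[ℝ] g →ₗ[ℝ] g)
    (hB : ∀ u v w : g, 2 * ip (J (B u v)) w
      = ip (J ⁅u, v⁆) w + ip (J ⁅w, u⁆) v + ip (J ⁅w, v⁆) u)
    (b : Module.Basis ι ℝ g)
    (hb : ∀ i j, ip (b i) (b j) = if i = j then 1 else 0)
    (τ : g)
    (hτ : ∀ u : g, ip (J τ) u
      = (∑ i, ip (J (B (b i) (b i))) u) - ∑ i, ip (J (A (b i) (b i))) u) :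
    τ = 0 ↔ ∀ u : g,
      LinearMap.trace ℝ g (J ∘ₗ LieAlgebra.ad ℝ g u)
        = LinearMap.trace ℝ g (LieAlgebra.ad ℝ g (J u)) := by
  have hBdiag (u w : g) : ip (J (B u u)) w = ip (J ⁅w, u⁆) u :=
    LieAlgebra.koszul_apply_self (β := ip.compLeft J) hB u w
  have hAdiag (u w : g) : ip (J (A u u)) w = ip ⁅J w, u⁆ u := by
    rw [hJsymm, LieAlgebra.koszul_apply_self hA]
  have hτ_trace (u : g) : ip (J τ) u = LinearMap.trace ℝ g (J ∘ₗ LieAlgebra.ad ℝ g u)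
      - LinearMap.trace ℝ g (LieAlgebra.ad ℝ g (J u)) := by
    rw [hτ, LinearMap.BilinForm.trace_eq_sum_of_orthonormal hb,
      LinearMap.BilinForm.trace_eq_sum_of_orthonormal hb]
    simp only [hBdiag, hAdiag, LinearMap.comp_apply, LieAlgebra.ad_apply]
  constructor
  · rintro rfl u
    simpa [sub_eq_zero] using (hτ_trace u).symm
  · intro h
    by_contra hτ0
    exact (hJpos τ hτ0).ne' (by rw [hτ_trace, h, sub_self])

/-- The identity map Id : (𝔤,⟨·,·⟩) → (𝔤,⟨J·,·⟩) has vanishing tension iff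
tr(J ∘ ad_u) = tr(ad_{Ju}) for all u. -/
theorem stmt_12 {g : Type*} [LieRing g] [LieAlgebra ℝ g] [FiniteDimensional ℝ g]
    {ι : Type*} [Fintype ι] [DecidableEq ι]
    (ip : LinearMap.BilinForm ℝ g)
    (hsymm : ∀ x y : g, ip x y = ip y x)
    (hpos : ∀ x : g, x ≠ 0 → 0 < ip x x)
    (J : g →ₗ[ℝ] g)
    (hJsymm : ∀ x y : g, ip (J x) y = ip x (J y))
    (hJpos : ∀ x : g, x ≠ 0 → 0 < ip (J x) x)
    (A : g →ₗ[ℝ] g →ₗ[ℝ] g)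
    (hA : ∀ u v w : g, 2 * ip (A u v) w = ip ⁅u, v⁆ w + ip ⁅w, u⁆ v + ip ⁅w, v⁆ u)
    (B : g →ₗ[ℝ] g →ₗ[ℝ] g)
    (hB : ∀ u v w : g, 2 * ip (J (B u v)) w
      = ip (J ⁅u, v⁆) w + ip (J ⁅w, u⁆) v + ip (J ⁅w, v⁆) u)
    (b : Module.Basis ι ℝ g)
    (hb : ∀ i j, ip (b i) (b j) = if i = j then 1 else 0)
    (τ : g)
    (hτ : ∀ u : g, ip (J τ) u
      = (∑ i, ip (J (B (b i) (b i))) u) - ∑ i, ip (J (A (b i) (b i))) u) :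
    τ = 0 ↔ ∀ u : g,
      LinearMap.trace ℝ g (J ∘ₗ LieAlgebra.ad ℝ g u)
        = LinearMap.trace ℝ g (LieAlgebra.ad ℝ g (J u)) :=
  stmt_12_general ip J hJsymm hJpos A hA B hB b hb τ hτ
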